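/- arXiv:1508.02812 — 7 statements merged into one kernel-verified Lean document; each statement's English description precedes it below -/
import Mathlib

section
/- Every decomposition game has a solution: for every finite nonempty type R and every payoff function ν : Finset R → ℝ, there exists a decomposition (D_1, …, D_k) of R such that every coalition D_i is cohesive and the decomposition is expansion-free. -/
/-- A coalition `D` is *cohesive* (w.r.t. the payoff function `ν`) if every
nonempty proper subset has strictly smaller payoff. -/
def Cohesive {R : Type*} [DecidableEq R] (ν : Finset R → ℝ) (D : Finset R) : Prop :=
  ∀ C : Finset R, C.Nonempty → C ⊂ D → ν C < ν D

/-- A *decomposition* of `R` is a finite family of nonempty, pairwise disjoint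
subsets of `R` whose union is all of `R`. -/
def IsDecomposition {R : Type*} [Fintype R] [DecidableEq R] {m : ℕ}
    (D : Fin m → Finset R) : Prop :=
  (∀ i, (D i).Nonempty) ∧ (∀ i j, i ≠ j → Disjoint (D i) (D j)) ∧
    Finset.univ.biUnion D = Finset.univ

/-- A decomposition is *expansion-free* if merging any two distinct coalitions
does not increase the larger of their payoffs. -/
def ExpansionFree {R : Type*} [DecidableEq R] (ν : Finset R → ℝ) {m : ℕ}
    (D : Fin m → Finset R) : Prop :=
  ∀ i j, i ≠ j → ν (D i ∪ D j) ≤ max (ν (D i)) (ν (D j))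

lemma mem_foldr_union {R : Type*} [DecidableEq R] (L : List (Finset R)) (x : R) :
    x ∈ L.foldr (· ∪ ·) ∅ ↔ ∃ D ∈ L, x ∈ D := by
  induction L with
  | nil => simp
  | cons A L ih => simp [ih]

lemma main_lemma {R : Type*} [Fintype R] [DecidableEq R] (ν : Finset R → ℝ) (S : Finset R) :
    ∃ L : List (Finset R), (∀ D ∈ L, D.Nonempty ∧ Cohesive ν D) ∧
      L.Pairwise (fun A B => Disjoint A B ∧ ν (A ∪ B) ≤ ν A) ∧
      L.foldr (· ∪ ·) ∅ = S := by
  induction S using Finset.strongInduction with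
  | _ S ih =>
    rcases S.eq_empty_or_nonempty with rfl | hS
    · exact ⟨[], by simp, by simp, rfl⟩
    · set P := S.powerset.filter (fun T => T.Nonempty) with hP
      obtain ⟨C0, hC0, hmax0⟩ := P.exists_max_image ν ⟨S, by simp [hP, hS]⟩
      obtain ⟨C, hC, hmin⟩ :=
        (P.filter (fun T => ν C0 ≤ ν T)).exists_min_image Finset.card
          ⟨C0, by simp [Finset.mem_filter, hC0]⟩
      simp only [Finset.mem_filter, hP, Finset.mem_powerset] at hC hC0
      obtain ⟨⟨hCS, hCne⟩, hC0C⟩ := hC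
      have hmaxC : ∀ T : Finset R, T ⊆ S → T.Nonempty → ν T ≤ ν C := by
        intro T hTS hTne
        exact le_trans (hmax0 T (by simp [hP, Finset.mem_filter, hTS, hTne])) hC0C
      have hminC : ∀ T : Finset R, T ⊆ S → T.Nonempty → ν C ≤ ν T → C.card ≤ T.card := by
        intro T hTS hTne hle
        exact hmin T (by simp [hP, Finset.mem_filter, hTS, hTne]; linarith)
      have hcoh : Cohesive ν C := by
        intro C' hC'ne hC'C
        rcases lt_or_ge (ν C') (ν C) with h | h
        · exact h
        · exfalso
          have := hminC C' (hC'C.subset.trans hCS) hC'ne h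
          have := Finset.card_lt_card hC'C
          omega
      obtain ⟨L, h1, h2, h3⟩ := ih (S \ C) (Finset.sdiff_ssubset hCS hCne)
      have hsub : ∀ B ∈ L, B ⊆ S \ C := by
        intro B hB x hx
        rw [← h3, mem_foldr_union]
        exact ⟨B, hB, hx⟩
      refine ⟨C :: L, ?_, ?_, ?_⟩
      · intro D hD
        rcases List.mem_cons.mp hD with h | h
        · exact h ▸ ⟨hCne, hcoh⟩
        · exact h1 D h
      · refine List.Pairwise.cons ?_ h2
        intro B hB
        have hBS : B ⊆ S \ C := hsub B hB
        constructor
        · rw [Finset.disjoint_left]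
          intro x hx hxB
          exact (Finset.mem_sdiff.mp (hBS hxB)).2 hx
        · exact hmaxC _ (Finset.union_subset hCS (hBS.trans (Finset.sdiff_subset)))
            (hCne.mono Finset.subset_union_left)
      · simp only [List.foldr_cons, h3]
        exact Finset.union_sdiff_of_subset hCS

/-- **Theorem 1 (Solution Existence).** Every decomposition game has a solution:
a decomposition in which every coalition is cohesive and which is expansion-free. -/
theorem exists_solution (R : Type*) [Fintype R] [DecidableEq R] [Nonempty R]
    (ν : Finset R → ℝ) :
    ∃ (m : ℕ) (D : Fin m → Finset R), IsDecomposition D ∧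
      (∀ i, Cohesive ν (D i)) ∧ ExpansionFree ν D := by
  obtain ⟨L, h1, h2, h3⟩ := main_lemma ν (Finset.univ : Finset R)
  have hpw := List.pairwise_iff_get.mp h2
  refine ⟨L.length, fun i => L.get i, ⟨?_, ?_, ?_⟩, ?_, ?_⟩
  · intro i
    exact (h1 _ (L.get_mem i)).1
  · intro i j hij
    rcases lt_or_gt_of_ne hij with h | h
    · exact (hpw i j h).1
    · exact ((hpw j i h).1).symm
  · apply Finset.eq_univ_of_forall
    intro x
    have hx : x ∈ L.foldr (· ∪ ·) ∅ := by rw [h3]; exact Finset.mem_univ x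
    obtain ⟨D, hD, hxD⟩ := (mem_foldr_union L x).mp hx
    obtain ⟨i, rfl⟩ := List.mem_iff_get.mp hD
    exact Finset.mem_biUnion.mpr ⟨i, Finset.mem_univ i, hxD⟩
  · intro i
    exact (h1 _ (L.get_mem i)).2
  · intro i j hij
    rcases lt_or_gt_of_ne hij with h | h
    · exact le_trans (hpw i j h).2 (le_max_left _ _)
    · rw [Finset.union_comm]
      exact le_trans (hpw j i h).2 (le_max_right _ _)
end

section
/- Greedy decompositions are expansion-free and have non-increasing payoffs: let R be a finite nonempty type, ν : Finset R → ℝ, and let (D_1, …, D_k) be a decomposition of R such that for each i, ν(D_i) ≥ ν(D) for every nonempty subset D ⊆ R ∖ (D_1 ∪ … ∪ D_{i−1}). Then ν(D_1) ≥ ν(D_2) ≥ … ≥ ν(D_k), and for all i < j one has ν(D_i ∪ D_j) ≤ max(ν(D_i), ν(D_j)); in particular the decomposition is expansion-free. -/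
/-- Greedy decompositions are expansion-free and have non-increasing payoffs:
if `(D 1, …, D k)` is a decomposition of `R` such that each `D i` has maximal
payoff among the nonempty subsets of `R ∖ (D 1 ∪ … ∪ D (i-1))`, then
`ν (D 1) ≥ ν (D 2) ≥ … ≥ ν (D k)` and `ν (D i ∪ D j) ≤ max (ν (D i)) (ν (D j))`
for all `i < j`; in particular the decomposition is expansion-free. -/
theorem greedy_decomposition_expansionFree (R : Type*) [Fintype R] [DecidableEq R]
    [Nonempty R] (ν : Finset R → ℝ) (k : ℕ) (D : Fin k → Finset R)
    (hdec : IsDecomposition D)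
    (hgreedy : ∀ i : Fin k, ∀ D' : Finset R,
      D' ⊆ Finset.univ \ ((Finset.univ.filter (fun j => j < i)).biUnion D) →
      D'.Nonempty → ν D' ≤ ν (D i)) :
    (∀ i j : Fin k, i ≤ j → ν (D j) ≤ ν (D i)) ∧
      ((∀ i j : Fin k, i < j → ν (D i ∪ D j) ≤ max (ν (D i)) (ν (D j))) ∧
        ExpansionFree ν D) := by

  obtain ⟨hne, hdisj, -⟩ := hdec
  have hsub : ∀ i j : Fin k, i ≤ j →
      D j ⊆ Finset.univ \ ((Finset.univ.filter (fun l => l < i)).biUnion D) := by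
    intro i j hij x hx
    simp only [Finset.mem_sdiff, Finset.mem_biUnion, Finset.mem_filter,
      Finset.mem_univ, true_and]
    rintro ⟨l, hl, hxl⟩
    exact Finset.notMem_empty x (Finset.bot_eq_empty ▸
      (hdisj l j (ne_of_lt (lt_of_lt_of_le hl hij))).le_bot
      (Finset.mem_inter.mpr ⟨hxl, hx⟩))
  have hmono : ∀ i j : Fin k, i ≤ j → ν (D j) ≤ ν (D i) := by
    intro i j hij
    exact hgreedy i (D j) (hsub i j hij) (hne j)
  have hpair : ∀ i j : Fin k, i < j → ν (D i ∪ D j) ≤ max (ν (D i)) (ν (D j)) := by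
    intro i j hij
    have hsubU : D i ∪ D j ⊆
        Finset.univ \ ((Finset.univ.filter (fun l => l < i)).biUnion D) :=
      Finset.union_subset (hsub i i le_rfl) (hsub i j hij.le)
    have := hgreedy i (D i ∪ D j) hsubU ((hne i).mono Finset.subset_union_left)
    exact this.trans (le_max_left _ _)
  refine ⟨hmono, hpair, ?_⟩
  intro i j hij
  rcases lt_or_gt_of_ne hij with h | h
  · exact hpair i j h
  · rw [Finset.union_comm, max_comm]
    exact hpair j i h
end

section
/- Solutions of decomposition games need not be unique (Proposition 1, concrete witness): let the players be d_1, …, d_6 (i.e., R = Fin 6) and define a pairwise weight w by w({d_i, d_j}) = 1/10 whenever {d_i, d_j} ⊆ {d_1, d_2, d_3, d_4} or {d_i, d_j} ⊆ {d_4, d_5, d_6}, and w({d_i, d_j}) = −1/10 whenever i ∈ {1,2,3} and j ∈ {5,6}; define ν(D) as the sum of w({d_i, d_j}) over all unordered pairs {d_i, d_j} ⊆ D. Then both decompositions C⃗ = ({d_1, d_2, d_3}, {d_4, d_5, d_6}) and D⃗ = ({d_1, d_2, d_3, d_4}, {d_5, d_6}) are solutions of the game (R, ν), and C⃗ ≠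 D⃗; in particular ν({d_1,d_2,d_3}) = ν({d_4,d_5,d_6}) = 3/10, ν({d_1,d_2,d_3,d_4}) = 6/10, ν({d_5,d_6}) = 1/10, and ν(R) = 3/10. -/
/-- A *solution* of the decomposition game `(R, ν)` is a decomposition all of
whose coalitions are cohesive and which is expansion-free. -/
def IsSolution {R : Type*} [Fintype R] [DecidableEq R] (ν : Finset R → ℝ) {m : ℕ}
    (D : Fin m → Finset R) : Prop :=
  IsDecomposition D ∧ (∀ i, Cohesive ν (D i)) ∧ ExpansionFree ν D

/-- The pairwise weight of Proposition 1: players are `d_1, …, d_6`,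
represented by `0, …, 5 : Fin 6`.  Pairs inside `{d_1, d_2, d_3, d_4}` or inside
`{d_4, d_5, d_6}` weigh `1/10`; pairs with one member in `{d_1, d_2, d_3}` and
the other in `{d_5, d_6}` weigh `-1/10`. -/
noncomputable def pairWeight (i j : Fin 6) : ℝ :=
  if ({i, j} : Finset (Fin 6)) ⊆ ({0, 1, 2, 3} : Finset (Fin 6)) ∨
      ({i, j} : Finset (Fin 6)) ⊆ ({3, 4, 5} : Finset (Fin 6)) then 1 / 10
  else if (i ∈ ({0, 1, 2} : Finset (Fin 6)) ∧ j ∈ ({4, 5} : Finset (Fin 6))) ∨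
      (j ∈ ({0, 1, 2} : Finset (Fin 6)) ∧ i ∈ ({4, 5} : Finset (Fin 6))) then -1 / 10
  else 0

/-- The payoff of a coalition `D` is the sum of the pairwise weights over all
unordered pairs of distinct players of `D`. -/
noncomputable def payoff (D : Finset (Fin 6)) : ℝ :=
  ∑ i ∈ D, ∑ j ∈ D.filter (fun j => i < j), pairWeight i j

/-- Integer version of `pairWeight` (scaled by 10). -/
def pairWeightZ (i j : Fin 6) : ℤ :=
  if ({i, j} : Finset (Fin 6)) ⊆ ({0, 1, 2, 3} : Finset (Fin 6)) ∨
      ({i, j} : Finset (Fin 6)) ⊆ ({3, 4, 5} : Finset (Fin 6)) then 1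
  else if (i ∈ ({0, 1, 2} : Finset (Fin 6)) ∧ j ∈ ({4, 5} : Finset (Fin 6))) ∨
      (j ∈ ({0, 1, 2} : Finset (Fin 6)) ∧ i ∈ ({4, 5} : Finset (Fin 6))) then -1
  else 0

/-- Integer version of `payoff` (scaled by 10). -/
def payoffZ (D : Finset (Fin 6)) : ℤ :=
  ∑ i ∈ D, ∑ j ∈ D.filter (fun j => i < j), pairWeightZ i j

lemma pairWeight_eq (i j : Fin 6) : pairWeight i j = (pairWeightZ i j : ℝ) / 10 := by
  unfold pairWeight pairWeightZ
  split_ifs <;> norm_num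

lemma payoff_eq (D : Finset (Fin 6)) : payoff D = (payoffZ D : ℝ) / 10 := by
  unfold payoff payoffZ
  push_cast
  rw [Finset.sum_div]
  refine Finset.sum_congr rfl fun i _ => ?_
  rw [Finset.sum_div]
  exact Finset.sum_congr rfl fun j _ => pairWeight_eq i j

lemma cohesive_of_Z {D : Finset (Fin 6)}
    (h : ∀ C : Finset (Fin 6), C.Nonempty → C ⊂ D → payoffZ C < payoffZ D) :
    Cohesive payoff D := by
  intro C hC hCD
  rw [payoff_eq, payoff_eq]
  have := h C hC hCD
  have : (payoffZ C : ℝ) < payoffZ D := by exact_mod_cast this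
  linarith

lemma payoff_le_of_Z {C D : Finset (Fin 6)} (h : payoffZ C ≤ payoffZ D) :
    payoff C ≤ payoff D := by
  rw [payoff_eq, payoff_eq]
  have : (payoffZ C : ℝ) ≤ payoffZ D := by exact_mod_cast h
  linarith

/-- **Proposition 1 (non-uniqueness of solutions), concrete witness.**
Both `C⃗ = ({d_1, d_2, d_3}, {d_4, d_5, d_6})` and
`D⃗ = ({d_1, d_2, d_3, d_4}, {d_5, d_6})` are solutions of the game, and they are
distinct; moreover `ν(C_1) = ν(C_2) = 3/10`, `ν(D_1) = 6/10`, `ν(D_2) = 1/10`,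
and `ν(R) = 3/10`. -/
theorem solution_not_unique :
    IsSolution payoff (![{0, 1, 2}, {3, 4, 5}] : Fin 2 → Finset (Fin 6)) ∧
    IsSolution payoff (![{0, 1, 2, 3}, {4, 5}] : Fin 2 → Finset (Fin 6)) ∧
    (![{0, 1, 2}, {3, 4, 5}] : Fin 2 → Finset (Fin 6)) ≠
      (![{0, 1, 2, 3}, {4, 5}] : Fin 2 → Finset (Fin 6)) ∧
    payoff {0, 1, 2} = 3 / 10 ∧ payoff {3, 4, 5} = 3 / 10 ∧
    payoff {0, 1, 2, 3} = 6 / 10 ∧ payoff {4, 5} = 1 / 10 ∧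
    payoff Finset.univ = 3 / 10 := by
  refine ⟨⟨?_, ?_, ?_⟩, ⟨?_, ?_, ?_⟩, ?_, ?_, ?_, ?_, ?_, ?_⟩
  · exact ⟨by decide, by decide, by decide⟩
  · intro i
    fin_cases i <;> simp only [Matrix.cons_val_zero, Matrix.cons_val_one, Matrix.head_cons] <;>
      exact cohesive_of_Z (by decide)
  · intro i j hij
    fin_cases i <;> fin_cases j <;>
      simp only [Matrix.cons_val_zero, Matrix.cons_val_one, Matrix.head_cons] at * <;>
      first
        | exact absurd rfl hij
        | exact le_trans (payoff_le_of_Z (by decide)) (le_max_left _ _)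
        | exact le_trans (payoff_le_of_Z (by decide)) (le_max_right _ _)
  · exact ⟨by decide, by decide, by decide⟩
  · intro i
    fin_cases i <;> simp only [Matrix.cons_val_zero, Matrix.cons_val_one, Matrix.head_cons] <;>
      exact cohesive_of_Z (by decide)
  · intro i j hij
    fin_cases i <;> fin_cases j <;>
      simp only [Matrix.cons_val_zero, Matrix.cons_val_one, Matrix.head_cons] at * <;>
      first
        | exact absurd rfl hij
        | exact le_trans (payoff_le_of_Z (by decide)) (le_max_left _ _)
        | exact le_trans (payoff_le_of_Z (by decide)) (le_max_right _ _)
  · intro h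
    have := congrFun h 0
    simp at this
    exact absurd (congrArg (3 ∈ ·) this) (by decide)
  · have h : payoffZ ({0, 1, 2} : Finset (Fin 6)) = 3 := by decide
    rw [payoff_eq, h]; norm_num
  · have h : payoffZ ({3, 4, 5} : Finset (Fin 6)) = 3 := by decide
    rw [payoff_eq, h]; norm_num
  · have h : payoffZ ({0, 1, 2, 3} : Finset (Fin 6)) = 6 := by decide
    rw [payoff_eq, h]; norm_num
  · have h : payoffZ ({4, 5} : Finset (Fin 6)) = 1 := by decide
    rw [payoff_eq, h]; norm_num
  · have h : payoffZ (Finset.univ : Finset (Fin 6)) = 3 := by decide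
    rw [payoff_eq, h]; norm_num
end

section
/- Lemma 1 (merged pairs of a maximally k-cohesive decomposition are k-cohesive): let R be a finite nonempty type, ν : Finset R → ℝ, k ≥ 1 an integer, and let (D_1, …, D_m) be a maximally k-cohesive decomposition of R. If 1 ≤ i < j ≤ m and ν(D_i ∪ D_j) > max(ν(D_i), ν(D_j)), then the coalition D_i ∪ D_j is k-cohesive. -/
/-- A coalition `D` is *k-cohesive* (w.r.t. the payoff function `ν`) if every
nonempty proper subset with at most `k` players has strictly smaller payoff. -/
def KCohesive {R : Type*} [DecidableEq R] (ν : Finset R → ℝ) (k : ℕ)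
    (D : Finset R) : Prop :=
  ∀ C : Finset R, C.Nonempty → C ⊂ D → C.card ≤ k → ν C < ν D

/-- A coalition `D` is *maximally k-cohesive* in a finite set `S` if `D ⊆ S`,
`|D| ≤ k`, `D` is k-cohesive, and `ν D ≥ ν D'` for every nonempty `D' ⊆ S`
with `|D'| ≤ k`. -/
def MaxKCohesiveIn {R : Type*} [DecidableEq R] (ν : Finset R → ℝ) (k : ℕ)
    (D S : Finset R) : Prop :=
  D ⊆ S ∧ D.card ≤ k ∧ KCohesive ν k D ∧
    ∀ D' : Finset R, D' ⊆ S → D'.Nonempty → D'.card ≤ k → ν D' ≤ ν D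

/-- The tail union `S i = D i ∪ D (i+1) ∪ … ∪ D (m-1)` of a family of coalitions. -/
def tailUnion {R : Type*} [Fintype R] [DecidableEq R] {m : ℕ}
    (D : Fin m → Finset R) (i : Fin m) : Finset R :=
  (Finset.univ.filter (fun j => i ≤ j)).biUnion D

/-- A decomposition `(D 1, …, D m)` is *maximally k-cohesive* if each `D i` is
maximally k-cohesive in `S i = D i ∪ D (i+1) ∪ … ∪ D m`. -/
def MaxKCohesiveDecomposition {R : Type*} [Fintype R] [DecidableEq R]
    (ν : Finset R → ℝ) (k : ℕ) {m : ℕ} (D : Fin m → Finset R) : Prop :=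
  IsDecomposition D ∧ ∀ i : Fin m, MaxKCohesiveIn ν k (D i) (tailUnion D i)

/-- **Lemma 1.** If `(D 1, …, D m)` is a maximally k-cohesive decomposition and
`i < j` are such that `ν (D i ∪ D j) > max (ν (D i)) (ν (D j))`, then the merged
coalition `D i ∪ D j` is k-cohesive. -/
theorem merged_pair_kcohesive (R : Type*) [Fintype R] [DecidableEq R] [Nonempty R]
    (ν : Finset R → ℝ) (k : ℕ) (hk : 1 ≤ k) (m : ℕ) (D : Fin m → Finset R)
    (hD : MaxKCohesiveDecomposition ν k D)
    (i j : Fin m) (hij : i < j)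
    (hgain : max (ν (D i)) (ν (D j)) < ν (D i ∪ D j)) :
    KCohesive ν k (D i ∪ D j) := by
  intro C hC hCsub hCcard
  have hsub : D i ∪ D j ⊆ tailUnion D i := by
    intro x hx
    simp only [tailUnion, Finset.mem_biUnion, Finset.mem_filter, Finset.mem_univ, true_and]
    rcases Finset.mem_union.1 hx with h | h
    · exact ⟨i, le_refl i, h⟩
    · exact ⟨j, hij.le, h⟩
  have hmax := (hD.2 i).2.2.2 C (fun x hx => hsub (hCsub.1 hx)) hC hCcard
  calc ν C ≤ ν (D i) := hmax
    _ ≤ max (ν (D i)) (ν (D j)) := le_max_left _ _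
    _ < ν (D i ∪ D j) := hgain
end

section
/- Existence of maximally k-cohesive decompositions: for every finite nonempty type R, every payoff function ν : Finset R → ℝ, and every integer k ≥ 1, there exists a decomposition (D_1, …, D_m) of R such that for each i, the coalition D_i is maximally k-cohesive in S_i := D_i ∪ D_{i+1} ∪ … ∪ D_m. -/
lemma exists_maxKCohesive_in {R : Type*} [DecidableEq R] (ν : Finset R → ℝ) (k : ℕ)
    (hk : 1 ≤ k) (S : Finset R) (hS : S.Nonempty) :
    ∃ D : Finset R, D.Nonempty ∧ MaxKCohesiveIn ν k D S := by
  classical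
  set T : Finset (Finset R) :=
    S.powerset.filter (fun D => D.Nonempty ∧ D.card ≤ k) with hT
  have hTmem : ∀ D : Finset R, D ∈ T ↔ D ⊆ S ∧ D.Nonempty ∧ D.card ≤ k := by
    intro D; simp [hT, Finset.mem_filter, Finset.mem_powerset]
  obtain ⟨a, ha⟩ := hS
  have hTne : T.Nonempty := ⟨{a}, (hTmem {a}).2 ⟨Finset.singleton_subset_iff.2 ha,
    Finset.singleton_nonempty a, by simpa using hk⟩⟩
  obtain ⟨B, hB, hBmax⟩ := T.exists_max_image ν hTne
  set T' : Finset (Finset R) := T.filter (fun D => ν B ≤ ν D) with hT'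
  have hT'ne : T'.Nonempty := ⟨B, Finset.mem_filter.2 ⟨hB, le_rfl⟩⟩
  obtain ⟨D, hD, hDmin⟩ := T'.exists_min_image Finset.card hT'ne
  have hDT : D ∈ T := (Finset.mem_filter.1 hD).1
  have hDν : ν B ≤ ν D := (Finset.mem_filter.1 hD).2
  obtain ⟨hDS, hDne, hDk⟩ := (hTmem D).1 hDT
  refine ⟨D, hDne, hDS, hDk, ?_, ?_⟩
  · intro C hCne hCD hCk
    have hCT : C ∈ T := (hTmem C).2 ⟨hCD.subset.trans hDS, hCne, hCk⟩
    have hle : ν C ≤ ν D := (hBmax C hCT).trans hDν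
    rcases lt_or_eq_of_le hle with h | h
    · exact h
    · exfalso
      have hCT' : C ∈ T' := Finset.mem_filter.2 ⟨hCT, hDν.trans h.ge⟩
      have := hDmin C hCT'
      exact absurd (Finset.card_lt_card hCD) (not_lt.2 this)
  · intro D' hD'S hD'ne hD'k
    exact (hBmax D' ((hTmem D').2 ⟨hD'S, hD'ne, hD'k⟩)).trans hDν

lemma aux_decomp {R : Type*} [Fintype R] [DecidableEq R] (ν : Finset R → ℝ) (k : ℕ)
    (hk : 1 ≤ k) : ∀ n (S : Finset R), S.card ≤ n → S.Nonempty →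
    ∃ (m : ℕ) (D : Fin m → Finset R), (∀ i, (D i).Nonempty) ∧
      (∀ i j, i ≠ j → Disjoint (D i) (D j)) ∧
      Finset.univ.biUnion D = S ∧
      ∀ i, MaxKCohesiveIn ν k (D i) (tailUnion D i) := by
  intro n
  induction n with
  | zero => intro S hcard hne
            simp [Finset.card_eq_zero.1 (Nat.le_zero.1 hcard)] at hne
  | succ n ih =>
    intro S hcard hne
    obtain ⟨D₀, hD₀ne, hD₀S, hD₀k, hD₀coh, hD₀max⟩ :=
      exists_maxKCohesive_in ν k hk S hne
    by_cases hrest : (S \ D₀).Nonempty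
    · have hcard' : (S \ D₀).card ≤ n := by
        have h1 : (S \ D₀).card = S.card - D₀.card := Finset.card_sdiff_of_subset hD₀S
        have h2 : 1 ≤ D₀.card := Finset.one_le_card.2 hD₀ne
        omega
      obtain ⟨m, D, h1, h2, h3, h4⟩ := ih (S \ D₀) hcard' hrest
      have hsub : ∀ i, D i ⊆ S \ D₀ := fun i =>
        h3 ▸ Finset.subset_biUnion_of_mem D (Finset.mem_univ i)
      have h0 : tailUnion (Fin.cons D₀ D : Fin (m+1) → Finset R) 0 = S := by
        ext x
        simp only [tailUnion, Finset.mem_biUnion, Finset.mem_filter, Finset.mem_univ,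
          true_and, Fin.zero_le, Fin.exists_fin_succ, Fin.cons_zero, Fin.cons_succ]
        constructor
        · rintro (h | ⟨i, hi⟩)
          · exact hD₀S h
          · exact (Finset.mem_sdiff.1 (hsub i hi)).1
        · intro hx
          by_cases h : x ∈ D₀
          · exact Or.inl h
          · right
            have : x ∈ Finset.univ.biUnion D := h3.symm ▸ Finset.mem_sdiff.2 ⟨hx, h⟩
            simpa using this
      have hsucc : ∀ i : Fin m, tailUnion (Fin.cons D₀ D : Fin (m+1) → Finset R) i.succ = tailUnion D i := by
        intro i; ext x
        simp only [tailUnion, Finset.mem_biUnion, Finset.mem_filter, Finset.mem_univ,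
          true_and]
        constructor
        · rintro ⟨j, hij, hj⟩
          rcases Fin.eq_zero_or_eq_succ j with rfl | ⟨j', rfl⟩
          · exact (Fin.succ_ne_zero i (le_antisymm hij (Fin.zero_le _))).elim
          · exact ⟨j', Fin.succ_le_succ_iff.1 hij, by simpa using hj⟩
        · rintro ⟨j, hij, hj⟩
          exact ⟨j.succ, Fin.succ_le_succ_iff.2 hij, by simpa using hj⟩
      have hd0 : ∀ j : Fin m, Disjoint D₀ (D j) := fun j =>
        Finset.disjoint_left.2 fun x hx hx' => (Finset.mem_sdiff.1 (hsub j hx')).2 hx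
      have hdisj : ∀ i j : Fin (m+1), i ≠ j →
          Disjoint ((Fin.cons D₀ D : Fin (m+1) → Finset R) i) ((Fin.cons D₀ D : Fin (m+1) → Finset R) j) := by
        intro i j hij
        rcases Fin.eq_zero_or_eq_succ i with rfl | ⟨i', rfl⟩ <;>
          rcases Fin.eq_zero_or_eq_succ j with rfl | ⟨j', rfl⟩
        · exact absurd rfl hij
        · simpa using hd0 j'
        · simpa using (hd0 i').symm
        · simp only [Fin.cons_succ]
          exact h2 i' j' (fun h => hij (by rw [h]))
      have hun : Finset.univ.biUnion (Fin.cons D₀ D : Fin (m+1) → Finset R) = S := by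
        rw [← h0]; unfold tailUnion; congr 1
        ext j; simp [Fin.zero_le]
      refine ⟨m + 1, (Fin.cons D₀ D : Fin (m+1) → Finset R), ?_, hdisj, hun, ?_⟩
      · intro i
        rcases Fin.eq_zero_or_eq_succ i with rfl | ⟨i', rfl⟩
        · simpa using hD₀ne
        · simpa using h1 i'
      · intro i
        rcases Fin.eq_zero_or_eq_succ i with rfl | ⟨i', rfl⟩
        · rw [h0]; exact ⟨hD₀S, hD₀k, hD₀coh, hD₀max⟩
        · rw [hsucc i']; simpa using h4 i'
    · have hSeq : S = D₀ :=
        le_antisymm (Finset.sdiff_eq_empty_iff_subset.1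
          (Finset.not_nonempty_iff_eq_empty.1 hrest)) hD₀S
      refine ⟨1, fun _ => D₀, fun _ => hD₀ne,
        fun i j hij => absurd (Subsingleton.elim i j) hij, by simp [hSeq], ?_⟩
      intro i
      have htail : tailUnion (fun _ : Fin 1 => D₀) i = D₀ := by
        ext x
        simp only [tailUnion, Finset.mem_biUnion, Finset.mem_filter, Finset.mem_univ,
          true_and]
        exact ⟨fun ⟨j, _, h⟩ => h, fun h => ⟨i, le_rfl, h⟩⟩
      rw [htail]
      exact ⟨hSeq ▸ hD₀S, hD₀k, hD₀coh, fun D' hD' => hD₀max D' (hSeq ▸ hD')⟩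

/-- **Existence of maximally k-cohesive decompositions** (correctness of the
subroutine `Cohesive(A, k)`): for every payoff function `ν` on a finite nonempty
type `R` and every `k ≥ 1` there is a decomposition `(D 1, …, D m)` of `R` such
that each `D i` is maximally k-cohesive in `S i = D i ∪ D (i+1) ∪ … ∪ D m`. -/
theorem exists_maxKCohesive_decomposition (R : Type*) [Fintype R] [DecidableEq R]
    [Nonempty R] (ν : Finset R → ℝ) (k : ℕ) (hk : 1 ≤ k) :
    ∃ (m : ℕ) (D : Fin m → Finset R), MaxKCohesiveDecomposition ν k D := by
  obtain ⟨m, D, h1, h2, h3, h4⟩ := aux_decomp ν k hk (Finset.univ.card) Finset.univ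
    le_rfl Finset.univ_nonempty
  exact ⟨m, D, ⟨h1, h2, h3⟩, h4⟩
end

section
/- Unions of blocks of a maximally k-cohesive decomposition are k-cohesive: let R be a finite nonempty type, ν : Finset R → ℝ, k ≥ 1 an integer, and let (D_1, …, D_m) be a maximally k-cohesive decomposition of R with S_i := D_i ∪ D_{i+1} ∪ … ∪ D_m. Let I ⊆ {1, …, m} be nonempty, set C := ⋃_{l ∈ I} D_l and i₀ := min I, and suppose that either C = D_{i₀} or ν(C) > ν(D_{i₀}). Then C is k-cohesive. -/
/-- Unions of blocks of a maximally k-cohesive decomposition are k-cohesive: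
if `(D 1, …, D m)` is a maximally k-cohesive decomposition, `I` is a nonempty set
of indices with minimum `i₀`, `C = ⋃_{l ∈ I} D l`, and either `C = D i₀` or
`ν C > ν (D i₀)`, then `C` is k-cohesive. -/
theorem union_of_blocks_kcohesive (R : Type*) [Fintype R] [DecidableEq R]
    [Nonempty R] (ν : Finset R → ℝ) (k : ℕ) (hk : 1 ≤ k) (m : ℕ)
    (D : Fin m → Finset R) (hD : MaxKCohesiveDecomposition ν k D)
    (I : Finset (Fin m)) (hI : I.Nonempty)
    (h : I.biUnion D = D (I.min' hI) ∨ ν (D (I.min' hI)) < ν (I.biUnion D)) :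
    KCohesive ν k (I.biUnion D) := by
  obtain ⟨hdec, hmax⟩ := hD
  set i₀ := I.min' hI with hi₀
  have hsub : I.biUnion D ⊆ tailUnion D i₀ := by
    intro x hx
    simp only [Finset.mem_biUnion] at hx
    obtain ⟨l, hl, hxl⟩ := hx
    simp only [tailUnion, Finset.mem_biUnion, Finset.mem_filter, Finset.mem_univ]
    exact ⟨l, ⟨trivial, I.min'_le l hl⟩, hxl⟩
  intro C hCne hCsub hCk
  have hle : ν C ≤ ν (D i₀) :=
    (hmax i₀).2.2.2 C (hCsub.subset.trans hsub) hCne hCk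
  rcases h with heq | hlt
  · rw [heq] at hCsub ⊢
    exact (hmax i₀).2.2.1 C hCne hCsub hCk
  · exact lt_of_le_of_lt hle hlt
end

section
/- One merging step preserves k-cohesion: let R be a finite nonempty type, ν : Finset R → ℝ, k ≥ 1 an integer, and let (D_1, …, D_m) be a maximally k-cohesive decomposition of R with m ≥ 2. If 1 ≤ i < j ≤ m and ν(D_i ∪ D_j) > max(ν(D_i), ν(D_j)), then the family obtained from (D_1, …, D_m) by replacing the two coalitions D_i and D_j with the single coalition D_i ∪ D_j is again a decomposition of R, and every coalition of this new decomposition is k-cohesive. -/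
/-- **One merging step preserves k-cohesion.** If `(D 1, …, D m)` (with `m ≥ 2`)
is a maximally k-cohesive decomposition and `i < j` satisfy
`ν (D i ∪ D j) > max (ν (D i)) (ν (D j))`, then the family obtained by replacing
the two coalitions `D i` and `D j` by the single coalition `D i ∪ D j` is again a
decomposition of `R` (nonempty, pairwise disjoint blocks covering `R`), and every
coalition of this new decomposition is k-cohesive. -/
theorem merge_step_preserves_kcohesion (R : Type*) [Fintype R] [DecidableEq R]
    [Nonempty R] (ν : Finset R → ℝ) (k : ℕ) (hk : 1 ≤ k)
    (m : ℕ) (hm : 2 ≤ m) (D : Fin m → Finset R)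
    (hD : MaxKCohesiveDecomposition ν k D)
    (i j : Fin m) (hij : i < j)
    (hgain : max (ν (D i)) (ν (D j)) < ν (D i ∪ D j))
    (P : Finset (Finset R))
    (hP : P = insert (D i ∪ D j) (((Finset.univ.erase i).erase j).image D)) :
    (∀ A ∈ P, A.Nonempty) ∧
      ((P : Set (Finset R)).PairwiseDisjoint id) ∧
      P.biUnion id = Finset.univ ∧
      ∀ A ∈ P, KCohesive ν k A := by
  obtain ⟨⟨hne, hdisj, huniv⟩, hmax⟩ := hD
  have hsubU : D i ∪ D j ⊆ tailUnion D i := by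
    apply Finset.union_subset
    · intro x hx
      exact Finset.mem_biUnion.2 ⟨i, Finset.mem_filter.2 ⟨Finset.mem_univ _, le_refl _⟩, hx⟩
    · intro x hx
      exact Finset.mem_biUnion.2 ⟨j, Finset.mem_filter.2 ⟨Finset.mem_univ _, hij.le⟩, hx⟩
  have hdisjU : ∀ l : Fin m, l ≠ i → l ≠ j → Disjoint (D i ∪ D j) (D l) := by
    intro l hli hlj
    exact Finset.disjoint_union_left.2 ⟨hdisj i l (fun h => hli h.symm),
      hdisj j l (fun h => hlj h.symm)⟩
  subst hP
  refine ⟨?_, ?_, ?_, ?_⟩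
  · intro A hA
    rcases Finset.mem_insert.1 hA with rfl | h
    · exact ⟨(hne i).choose, Finset.mem_union_left _ (hne i).choose_spec⟩
    · obtain ⟨l, _, rfl⟩ := Finset.mem_image.1 h
      exact hne l
  · intro A hA B hB hAB
    have hA' : A ∈ insert (D i ∪ D j) (((Finset.univ.erase i).erase j).image D) :=
      Finset.mem_coe.1 hA
    have hB' : B ∈ insert (D i ∪ D j) (((Finset.univ.erase i).erase j).image D) :=
      Finset.mem_coe.1 hB
    rcases Finset.mem_insert.1 hA' with rfl | hA2
    · rcases Finset.mem_insert.1 hB' with rfl | hB2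
      · exact absurd rfl hAB
      · obtain ⟨l, hl, rfl⟩ := Finset.mem_image.1 hB2
        have hlj : l ≠ j := Finset.ne_of_mem_erase hl
        have hli : l ≠ i := Finset.ne_of_mem_erase (Finset.mem_of_mem_erase hl)
        exact hdisjU l hli hlj
    · obtain ⟨l, hl, rfl⟩ := Finset.mem_image.1 hA2
      have hlj : l ≠ j := Finset.ne_of_mem_erase hl
      have hli : l ≠ i := Finset.ne_of_mem_erase (Finset.mem_of_mem_erase hl)
      rcases Finset.mem_insert.1 hB' with rfl | hB2
      · exact (hdisjU l hli hlj).symm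
      · obtain ⟨l', _, rfl⟩ := Finset.mem_image.1 hB2
        by_cases hll : l = l'
        · exact absurd (congrArg D hll) hAB
        · exact hdisj l l' hll
  · apply Finset.eq_univ_of_forall
    intro x
    have hx : x ∈ Finset.univ.biUnion D := huniv.symm ▸ Finset.mem_univ x
    obtain ⟨l, _, hxl⟩ := Finset.mem_biUnion.1 hx
    apply Finset.mem_biUnion.2
    by_cases hli : l = i
    · exact ⟨D i ∪ D j, Finset.mem_insert_self _ _,
        Finset.mem_union_left _ (hli ▸ hxl)⟩
    · by_cases hlj : l = j
      · exact ⟨D i ∪ D j, Finset.mem_insert_self _ _,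
          Finset.mem_union_right _ (hlj ▸ hxl)⟩
      · exact ⟨D l, Finset.mem_insert_of_mem (Finset.mem_image.2 ⟨l,
          Finset.mem_erase.2 ⟨hlj, Finset.mem_erase.2 ⟨hli, Finset.mem_univ _⟩⟩, rfl⟩), hxl⟩
  · intro A hA
    rcases Finset.mem_insert.1 hA with rfl | h
    · intro C hCne hCsub hCcard
      have h1 : ν C ≤ ν (D i) := (hmax i).2.2.2 C (hCsub.subset.trans hsubU) hCne hCcard
      exact h1.trans_lt ((le_max_left _ _).trans_lt hgain)
    · obtain ⟨l, _, rfl⟩ := Finset.mem_image.1 h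
      exact (hmax l).2.2.1
end
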